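/- Let A be symmetric positive definite, N symmetric with λ_min(N) > -λ_min(A), and β_n = (λ_min(N)+λ_max(N))/2. Then I - (A + β_n I)⁻¹(A + N) = (A + β_n I)⁻¹(β_n I - N), and its spectral norm is bounded by (β_n - λ_min(N))/(λ_min(A) + β_n) < 1. -/

import Mathlib

/-!
Both factors of `(A + βI)⁻¹ (βI - N)` are real functions of a single symmetric matrix:
`(A + βI)⁻¹ = f(A)` with `f x = (x + β)⁻¹`, and `βI - N = g(N)` with `g x = β - x`.
The functional calculus of a symmetric matrix is isometric for the spectral norm, so
`‖f(A)‖ ≤ (λ_min(A) + β)⁻¹` and `‖g(N)‖ ≤ max (β - λ_min(N)) (λ_max(N) - β)`; the midpoint choice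
of `β` makes both terms of this maximum equal. Submultiplicativity gives the bound, which is `< 1`
exactly because `λ_min(N) > -λ_min(A)`.
-/

open Matrix

noncomputable def specNorm {n : ℕ} (A : Matrix (Fin n) (Fin n) ℝ) : ℝ :=
  ‖Matrix.toEuclideanCLM (𝕜 := ℝ) A‖

noncomputable def lamMin {n : ℕ} [NeZero n] {A : Matrix (Fin n) (Fin n) ℝ}
    (hA : A.IsHermitian) : ℝ :=
  Finset.univ.inf' Finset.univ_nonempty hA.eigenvalues

noncomputable def lamMax {n : ℕ} [NeZero n] {A : Matrix (Fin n) (Fin n) ℝ}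
    (hA : A.IsHermitian) : ℝ :=
  Finset.univ.sup' Finset.univ_nonempty hA.eigenvalues

open scoped Matrix.Norms.L2Operator

namespace Matrix.IsHermitian

variable {ι : Type*} [Fintype ι] [DecidableEq ι] {M : Matrix ι ι ℝ}

theorem forall_mem_spectrum_iff (hM : M.IsHermitian) {P : ℝ → Prop} :
    (∀ x ∈ spectrum ℝ M, P x) ↔ ∀ i, P (hM.eigenvalues i) := by
  rw [hM.spectrum_real_eq_range_eigenvalues, Set.forall_mem_range]

theorem norm_cfc_le (hM : M.IsHermitian) {f : ℝ → ℝ} {c : ℝ} (hc : 0 ≤ c)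
    (hf : ∀ i, |f (hM.eigenvalues i)| ≤ c) : ‖cfc f M‖ ≤ c :=
  _root_.norm_cfc_le (a := M) hc (hM.forall_mem_spectrum_iff.2 hf)

theorem smul_one_sub_eq_cfc (hM : M.IsHermitian) (β : ℝ) :
    β • 1 - M = cfc (fun x => β - x) M := by
  rw [cfc_sub .., cfc_const β M, cfc_id' ℝ M, Algebra.algebraMap_eq_smul_one]

theorem add_smul_one_eq_cfc (hM : M.IsHermitian) (β : ℝ) :
    M + β • 1 = cfc (fun x => x + β) M := by
  rw [cfc_add_const β _ M, cfc_id' ℝ M, Algebra.algebraMap_eq_smul_one]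

theorem isUnit_add_smul_one (hM : M.IsHermitian) {β : ℝ} (hβ : ∀ i, hM.eigenvalues i + β ≠ 0) :
    IsUnit (M + β • 1) := by
  rw [hM.add_smul_one_eq_cfc, isUnit_cfc_iff .., hM.forall_mem_spectrum_iff]
  exact hβ

theorem inv_add_smul_one_eq_cfc (hM : M.IsHermitian) {β : ℝ}
    (hβ : ∀ i, hM.eigenvalues i + β ≠ 0) :
    (M + β • 1)⁻¹ = cfc (fun x => (x + β)⁻¹) M := by
  rw [cfc_inv _ M (hM.forall_mem_spectrum_iff.2 hβ), ← hM.add_smul_one_eq_cfc,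
    nonsing_inv_eq_ringInverse]

end Matrix.IsHermitian

theorem specNorm_eq_norm {n : ℕ} (M : Matrix (Fin n) (Fin n) ℝ) : specNorm M = ‖M‖ := rfl

theorem specNorm_mul_le {n : ℕ} (M M' : Matrix (Fin n) (Fin n) ℝ) :
    specNorm (M * M') ≤ specNorm M * specNorm M' :=
  norm_mul_le M M'

section Extremal

variable {n : ℕ} [NeZero n] {M : Matrix (Fin n) (Fin n) ℝ}

theorem lamMin_le_eigenvalues (hM : M.IsHermitian) (i : Fin n) : lamMin hM ≤ hM.eigenvalues i :=
  Finset.inf'_le _ (Finset.mem_univ i)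

theorem eigenvalues_le_lamMax (hM : M.IsHermitian) (i : Fin n) : hM.eigenvalues i ≤ lamMax hM :=
  Finset.le_sup' _ (Finset.mem_univ i)

theorem lamMin_le_lamMax (hM : M.IsHermitian) : lamMin hM ≤ lamMax hM :=
  (lamMin_le_eigenvalues hM 0).trans (eigenvalues_le_lamMax hM 0)

theorem specNorm_smul_one_sub_le (hM : M.IsHermitian) (β : ℝ) :
    specNorm (β • 1 - M) ≤ max (β - lamMin hM) (lamMax hM - β) := by
  have hbound (i : Fin n) : |β - hM.eigenvalues i| ≤ max (β - lamMin hM) (lamMax hM - β) :=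
    abs_sub_le_iff.2 ⟨le_max_of_le_left (sub_le_sub_left (lamMin_le_eigenvalues hM i) β),
      le_max_of_le_right (sub_le_sub_right (eigenvalues_le_lamMax hM i) β)⟩
  rw [specNorm_eq_norm, hM.smul_one_sub_eq_cfc]
  exact hM.norm_cfc_le ((abs_nonneg _).trans (hbound 0)) hbound

theorem specNorm_inv_add_smul_one_le (hM : M.IsHermitian) {β : ℝ} (hβ : 0 < lamMin hM + β) :
    specNorm (M + β • 1)⁻¹ ≤ (lamMin hM + β)⁻¹ := by
  have hshift (i : Fin n) : lamMin hM + β ≤ hM.eigenvalues i + β := by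
    linarith [lamMin_le_eigenvalues hM i]
  rw [specNorm_eq_norm, hM.inv_add_smul_one_eq_cfc fun i => (hβ.trans_le (hshift i)).ne']
  refine hM.norm_cfc_le (inv_nonneg.2 hβ.le) fun i => ?_
  rw [abs_of_pos (inv_pos.2 (hβ.trans_le (hshift i)))]
  exact inv_anti₀ hβ (hshift i)

end Extremal

/-- With `A` SPD, `N` symmetric, `λ_min(N) > -λ_min(A)` and `β = (λ_min(N)+λ_max(N))/2`:
`I - (A + βI)⁻¹(A + N) = (A + βI)⁻¹(βI - N)`, and its spectral norm is bounded by
`(β - λ_min(N))/(λ_min(A) + β) < 1`. -/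
theorem quasi_newton_contraction {n : ℕ} [NeZero n]
    (A N : Matrix (Fin n) (Fin n) ℝ)
    (hA : A.PosDef) (hN : N.IsHermitian)
    (hNA : -lamMin hA.1 < lamMin hN)
    (β : ℝ) (hβ : β = (lamMin hN + lamMax hN) / 2) :
    (1 : Matrix (Fin n) (Fin n) ℝ) - (A + β • 1)⁻¹ * (A + N)
        = (A + β • 1)⁻¹ * (β • 1 - N) ∧
    specNorm ((A + β • 1)⁻¹ * (β • 1 - N)) ≤ (β - lamMin hN) / (lamMin hA.1 + β) ∧
    (β - lamMin hN) / (lamMin hA.1 + β) < 1 := by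
  have hmid : lamMax hN - β ≤ β - lamMin hN := by linarith
  have hpos : 0 < lamMin hA.1 + β := by linarith [lamMin_le_lamMax hN]
  have hdet : IsUnit (A + β • 1).det := (isUnit_iff_isUnit_det _).1 <|
    hA.1.isUnit_add_smul_one fun i => by linarith [lamMin_le_eigenvalues hA.1 i]
  refine ⟨?_, ?_, (div_lt_one hpos).2 (by linarith)⟩
  · rw [show β • 1 - N = (A + β • 1) - (A + N) by abel, mul_sub, nonsing_inv_mul _ hdet]
  · calc specNorm ((A + β • 1)⁻¹ * (β • 1 - N))
        ≤ specNorm (A + β • 1)⁻¹ * specNorm (β • 1 - N) := specNorm_mul_le _ _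
      _ ≤ (lamMin hA.1 + β)⁻¹ * (β - lamMin hN) :=
        mul_le_mul (specNorm_inv_add_smul_one_le hA.1 hpos)
          ((specNorm_smul_one_sub_le hN β).trans (max_le le_rfl hmid)) (norm_nonneg _)
          (inv_nonneg.2 hpos.le)
      _ = (β - lamMin hN) / (lamMin hA.1 + β) := inv_mul_eq_div _ _
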